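/- Let X be a compact uniform space, f_{0,∞} a sequence of continuous self-maps of X, and μ a Borel probability measure on X that is f_{0,∞}-homogeneous. Then h(f_{0,∞}) = k(f_{0,∞}, μ) := lim_{γ∈𝒰^{s,o}} limsup_{n→∞} −(1/n) log μ(D_n(f_{0,∞}, y, γ)), independently of y. -/

import Mathlib

/-!
Fix an entourage `γ` and an open symmetric `t` with `t ○ t ⊆ γ`. The `t`-balls of order `n`
around an `(n, γ)`-separated set are pairwise disjoint, and by homogeneity each has measure at
least a fixed multiple of `μ (D_n(y, η))`; hence `s_n(γ) · μ (D_n(y, η))` is bounded above.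
Conversely, the `γ₀`-balls around a maximal `(n, γ₀)`-separated set cover `X`, and by homogeneity
each has measure at most a fixed multiple of `μ (D_n(y, γ))`; hence `s_n(γ₀) · μ (D_n(y, γ))` is
bounded below by a positive constant. Taking logarithms, dividing by `n` and passing to
`limsup` and then to the supremum over entourages gives the two inequalities.
-/

open Filter Set
open scoped Uniformity

/-- `itr f i n = f (i+n-1) ∘ ⋯ ∘ f i`, the composition of `n` maps of the sequence `f`
starting at index `i` (so `itr f i 0 = id`). -/
def itr {X : Type*} (f : ℕ → X → X) (i : ℕ) : ℕ → X → X
  | 0 => id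
  | n + 1 => fun x => f (i + n) (itr f i n x)

/-- `E` is an `(n,γ)`-separated set for the nonautonomous system `f`. -/
def IsSep {X : Type*} (f : ℕ → X → X) (n : ℕ) (γ : Set (X × X)) (E : Set X) : Prop :=
  ∀ x ∈ E, ∀ y ∈ E, x ≠ y → ∃ j < n, (itr f 0 j x, itr f 0 j y) ∉ γ

/-- `F` `(n,γ)`-spans the set `K` for the nonautonomous system `f`. -/
def Spans {X : Type*} (f : ℕ → X → X) (n : ℕ) (γ : Set (X × X)) (F K : Set X) : Prop :=
  ∀ x ∈ K, ∃ y ∈ F, ∀ j < n, (itr f 0 j x, itr f 0 j y) ∈ γ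

/-- Maximal cardinality of an `(n,γ)`-separated subset of `Λ`. -/
noncomputable def sepCard {X : Type*} (f : ℕ → X → X) (Λ : Set X) (n : ℕ)
    (γ : Set (X × X)) : ℕ :=
  sSup {m | ∃ E : Finset X, ↑E ⊆ Λ ∧ IsSep f n γ ↑E ∧ E.card = m}

/-- Minimal cardinality of a subset of `Λ` that `(n,γ)`-spans `Λ`. -/
noncomputable def spanCard {X : Type*} (f : ℕ → X → X) (Λ : Set X) (n : ℕ)
    (γ : Set (X × X)) : ℕ :=
  sInf {m | ∃ F : Finset X, ↑F ⊆ Λ ∧ Spans f n γ ↑F Λ ∧ F.card = m}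


/-- Topological entropy of the nonautonomous system `f` on the set `Λ`, defined via
separated sets; by antitonicity in the entourage, the supremum over all entourages agrees
with the limit along the net of symmetric open entourages used in the paper. -/
noncomputable def entropy {X : Type*} [UniformSpace X] (f : ℕ → X → X) (Λ : Set X) : EReal :=
  ⨆ γ ∈ 𝓤 X, atTop.limsup fun n : ℕ =>
    ((Real.log (sepCard f Λ n γ) / n : ℝ) : EReal)

/-- The dynamical `γ`-ball of order `n` at `x`:
`D_n(f, x, γ) = ⋂_{k<n} (f_0^k)⁻¹(γ[f_0^k(x)])`. -/
def dynBall {X : Type*} (f : ℕ → X → X) (x : X) (n : ℕ) (γ : Set (X × X)) : Set X :=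
  {y | ∀ k < n, (itr f 0 k x, itr f 0 k y) ∈ γ}

open scoped ENNReal NNReal SetRel
open MeasureTheory

section Dynamics

variable {X : Type*} {f : ℕ → X → X} {n : ℕ}

theorem continuous_itr [TopologicalSpace X] (hf : ∀ n, Continuous (f n)) (i n : ℕ) :
    Continuous (itr f i n) := by
  induction n with
  | zero => exact continuous_id
  | succ n ih => exact (hf (i + n)).comp ih

theorem mem_dynBall_self [UniformSpace X] (x : X) {γ : Set (X × X)} (hγ : γ ∈ 𝓤 X) :
    x ∈ dynBall f x n γ :=
  fun _ _ => refl_mem_uniformity hγ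

theorem dynBall_mono (x : X) {γ η : Set (X × X)} (h : γ ⊆ η) :
    dynBall f x n γ ⊆ dynBall f x n η :=
  fun _ hy k hk => h (hy k hk)

theorem notMem_dynBall_iff {x y : X} {γ : Set (X × X)} :
    y ∉ dynBall f x n γ ↔ ∃ j < n, (itr f 0 j x, itr f 0 j y) ∉ γ := by
  simp [dynBall]

theorem mem_dynBall_comm {x y : X} {γ : Set (X × X)} [SetRel.IsSymm γ] :
    x ∈ dynBall f y n γ ↔ y ∈ dynBall f x n γ :=
  ⟨fun h k hk => SetRel.symm γ (h k hk), fun h k hk => SetRel.symm γ (h k hk)⟩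

theorem isOpen_dynBall [TopologicalSpace X] (hf : ∀ n, Continuous (f n)) (x : X)
    {γ : Set (X × X)} (hγ : IsOpen γ) : IsOpen (dynBall f x n γ) := by
  have : dynBall f x n γ =
      ⋂ k ∈ Finset.range n, (fun y => (itr f 0 k x, itr f 0 k y)) ⁻¹' γ := by
    ext; simp [dynBall]
  rw [this]
  exact isOpen_biInter_finset fun k _ =>
    hγ.preimage (continuous_const.prodMk (continuous_itr hf 0 k))

theorem IsSep.of_subsingleton {γ : Set (X × X)} {E : Set X} (hE : E.Subsingleton) :
    IsSep f n γ E :=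
  fun _ hx _ hy hxy => absurd (hE hx hy) hxy

theorem IsSep.pairwiseDisjoint_dynBall {γ t : Set (X × X)} {E : Set X} (hE : IsSep f n γ E)
    [SetRel.IsSymm t] (htγ : t ○ t ⊆ γ) : E.PairwiseDisjoint fun e => dynBall f e n t := by
  intro e he e' he' hne
  refine Set.disjoint_left.mpr fun w hw hw' => ?_
  obtain ⟨j, hj, hjγ⟩ := hE e he e' he' hne
  exact hjγ (htγ ⟨itr f 0 j w, hw j hj, SetRel.symm t (hw' j hj)⟩)

/-- Distinct points of a separated set lie in distinct members of a finite cover by dynamical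
balls of half the size. -/
theorem bddAbove_card_isSep [UniformSpace X] [CompactSpace X] (hf : ∀ n, Continuous (f n))
    {γ : Set (X × X)} (hγ : γ ∈ 𝓤 X) (Λ : Set X) :
    BddAbove {m | ∃ E : Finset X, ↑E ⊆ Λ ∧ IsSep f n γ ↑E ∧ E.card = m} := by
  obtain ⟨t, ht, hto, _, htγ⟩ := comp_open_symm_mem_uniformity_sets hγ
  obtain ⟨s, hs⟩ := isCompact_univ.elim_finite_subcover (fun x : X => dynBall f x n t)
    (fun x => isOpen_dynBall hf x hto) (fun x _ => mem_iUnion.2 ⟨x, mem_dynBall_self x ht⟩)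
  have hcover : ∀ e : X, ∃ z ∈ s, e ∈ dynBall f z n t := fun e => by
    simpa using hs (mem_univ e)
  choose center hcenter_mem hmem_center using hcover
  refine ⟨s.card, ?_⟩
  rintro _ ⟨E, -, hE, rfl⟩
  refine Finset.card_le_card_of_injOn center (fun e _ => hcenter_mem e) fun e he e' he' heq => ?_
  by_contra hne
  have := hE.pairwiseDisjoint_dynBall htγ he he' hne
  exact Set.disjoint_left.mp this (mem_dynBall_comm.mp (hmem_center e))
    (mem_dynBall_comm.mp (heq ▸ hmem_center e'))

variable [UniformSpace X] [CompactSpace X] (hf : ∀ n, Continuous (f n))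
include hf

theorem IsSep.card_le_sepCard {γ : Set (X × X)} (hγ : γ ∈ 𝓤 X) {Λ : Set X} {E : Finset X}
    (hEΛ : ↑E ⊆ Λ) (hE : IsSep f n γ ↑E) : E.card ≤ sepCard f Λ n γ :=
  le_csSup (bddAbove_card_isSep hf hγ Λ) ⟨E, hEΛ, hE, rfl⟩

theorem exists_isSep_card_eq_sepCard {γ : Set (X × X)} (hγ : γ ∈ 𝓤 X) (Λ : Set X) :
    ∃ E : Finset X, ↑E ⊆ Λ ∧ IsSep f n γ ↑E ∧ E.card = sepCard f Λ n γ := by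
  refine Nat.sSup_mem ?_ (bddAbove_card_isSep hf hγ Λ)
  exact ⟨0, ∅, by simp, IsSep.of_subsingleton (by simp), rfl⟩

theorem sepCard_ne_zero {γ : Set (X × X)} (hγ : γ ∈ 𝓤 X) {Λ : Set X} (hΛ : Λ.Nonempty) :
    sepCard f Λ n γ ≠ 0 := by
  obtain ⟨x, hx⟩ := hΛ
  refine Nat.one_le_iff_ne_zero.mp ?_
  simpa using IsSep.card_le_sepCard (n := n) hf hγ (E := {x}) (by simpa using hx)
    (IsSep.of_subsingleton (by simp))

theorem IsSep.exists_mem_dynBall_of_card_eq_sepCard {γ : Set (X × X)} (hγ : γ ∈ 𝓤 X)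
    [SetRel.IsSymm γ] {Λ : Set X} {E : Finset X} (hEΛ : ↑E ⊆ Λ) (hE : IsSep f n γ ↑E)
    (hcard : E.card = sepCard f Λ n γ) {x : X} (hx : x ∈ Λ) :
    ∃ e ∈ E, x ∈ dynBall f e n γ := by
  classical
  by_contra! hfar
  have hxE : x ∉ E := fun h => hfar x h (mem_dynBall_self x hγ)
  have hsep : IsSep f n γ ↑(insert x E) := by
    intro a ha b hb hab
    simp only [Finset.coe_insert, mem_insert_iff, Finset.mem_coe] at ha hb
    rcases ha with rfl | ha <;> rcases hb with rfl | hb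
    · exact absurd rfl hab
    · exact notMem_dynBall_iff.mp (mem_dynBall_comm.not.mp (hfar b hb))
    · exact notMem_dynBall_iff.mp (hfar a ha)
    · exact hE a ha b hb hab
  have := hsep.card_le_sepCard hf hγ (by simpa [insert_subset_iff] using ⟨hx, hEΛ⟩)
  rw [Finset.card_insert_of_notMem hxE] at this
  omega

end Dynamics

theorem measure_univ_le_card_mul {X ι : Type*} [MeasurableSpace X] (μ : Measure X)
    {E : Finset ι} {s : ι → Set X} (hcover : ∀ x, ∃ e ∈ E, x ∈ s e) {m : ℝ≥0∞}
    (hm : ∀ e ∈ E, μ (s e) ≤ m) : μ univ ≤ E.card * m :=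
  calc μ univ ≤ μ (⋃ e ∈ E, s e) := measure_mono fun x _ => by simpa using hcover x
    _ ≤ ∑ e ∈ E, μ (s e) := measure_biUnion_finset_le E s
    _ ≤ ∑ _e ∈ E, m := Finset.sum_le_sum hm
    _ = E.card * m := by rw [Finset.sum_const, nsmul_eq_mul]

theorem IsSep.card_mul_le_mul_measure_univ {X : Type*} [UniformSpace X] [MeasurableSpace X]
    [OpensMeasurableSpace X] {f : ℕ → X → X} (hf : ∀ n, Continuous (f n)) (μ : Measure X)
    {n : ℕ} {γ t : Set (X × X)} {E : Finset X} (hE : IsSep f n γ ↑E) (ht : IsOpen t)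
    [SetRel.IsSymm t] (htγ : t ○ t ⊆ γ) {m c : ℝ≥0∞}
    (hm : ∀ x, m ≤ c * μ (dynBall f x n t)) : E.card * m ≤ c * μ univ :=
  calc E.card * m = ∑ _e ∈ E, m := by rw [Finset.sum_const, nsmul_eq_mul]
    _ ≤ ∑ e ∈ E, c * μ (dynBall f e n t) := Finset.sum_le_sum fun e _ => hm e
    _ = c * μ (⋃ e ∈ E, dynBall f e n t) := by
      rw [← Finset.mul_sum, measure_biUnion_finset (hE.pairwiseDisjoint_dynBall htγ)
        fun e _ => (isOpen_dynBall hf e ht).measurableSet]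
    _ ≤ c * μ univ := by gcongr; exact subset_univ _

theorem ENNReal.log_toReal_add_log_toReal_le {a b c : ℝ≥0∞} (ha : a ≠ 0) (hb : b ≠ 0)
    (hc : c ≠ ⊤) (h : a * b ≤ c) :
    Real.log a.toReal + Real.log b.toReal ≤ Real.log c.toReal := by
  have hab : a * b ≠ ⊤ := ne_top_of_le_ne_top hc h
  rw [← Real.log_mul (toReal_ne_zero.2 ⟨ha, (lt_top_of_mul_ne_top_left hab hb).ne⟩)
    (toReal_ne_zero.2 ⟨hb, (lt_top_of_mul_ne_top_right hab ha).ne⟩), ← toReal_mul]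
  exact Real.log_le_log (toReal_pos (mul_ne_zero ha hb) hab) (toReal_mono hc h)

theorem ENNReal.log_toReal_le_log_toReal_add_log_toReal {a b c : ℝ≥0∞} (ha : a ≠ ⊤)
    (hb : b ≠ ⊤) (hc : c ≠ 0) (h : c ≤ a * b) :
    Real.log c.toReal ≤ Real.log a.toReal + Real.log b.toReal := by
  have hab : a * b ≠ 0 := (pos_of_ne_zero hc |>.trans_le h).ne'
  rw [← Real.log_mul (toReal_ne_zero.2 ⟨left_ne_zero_of_mul hab, ha⟩)
    (toReal_ne_zero.2 ⟨right_ne_zero_of_mul hab, hb⟩), ← toReal_mul]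
  exact Real.log_le_log (toReal_pos hc (ne_top_of_le_ne_top (mul_ne_top ha hb) h))
    (toReal_mono (mul_ne_top ha hb) h)

theorem limsup_coe_div_le_of_le_const_add {a b : ℕ → ℝ} {C : ℝ}
    (h : ∀ᶠ n in atTop, a n ≤ C + b n) :
    atTop.limsup (fun n : ℕ => ((a n / n : ℝ) : EReal)) ≤
      atTop.limsup (fun n : ℕ => ((b n / n : ℝ) : EReal)) := by
  set u : ℕ → EReal := fun n => ((C / n : ℝ) : EReal)
  set v : ℕ → EReal := fun n => ((b n / n : ℝ) : EReal)
  have hu : atTop.limsup u = 0 :=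
    (EReal.tendsto_coe.mpr (tendsto_const_div_atTop_nhds_zero_nat C)).limsup_eq
  calc atTop.limsup (fun n : ℕ => ((a n / n : ℝ) : EReal))
      ≤ atTop.limsup (u + v) := by
        refine limsup_le_limsup (h.mono fun n hn => ?_)
        simp only [Pi.add_apply, u, v, ← EReal.coe_add, EReal.coe_le_coe_iff, ← add_div]
        exact div_le_div_of_nonneg_right hn n.cast_nonneg
    _ ≤ atTop.limsup u + atTop.limsup v := EReal.limsup_add_le (by simp [hu]) (by simp [hu])
    _ = atTop.limsup v := by rw [hu, zero_add]

/-- The comparison of dynamical balls required of an `f`-homogeneous measure in the paper. -/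
def IsHomogeneous {X : Type*} [UniformSpace X] [MeasurableSpace X] (f : ℕ → X → X)
    (μ : Measure X) : Prop :=
  ∀ γ ∈ 𝓤 X, ∃ η ∈ 𝓤 X, ∃ c : ℝ≥0, 0 < c ∧ ∀ x y : X, ∀ n : ℕ, 1 ≤ n →
    μ (dynBall f y n η) ≤ (c : ℝ≥0∞) * μ (dynBall f x n γ)

namespace IsHomogeneous

variable {X : Type*} [UniformSpace X] [CompactSpace X] [MeasurableSpace X]
  {f : ℕ → X → X} {μ : Measure X}

theorem exists_sepCard_mul_le [OpensMeasurableSpace X] [IsFiniteMeasure μ]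
    (hf : ∀ n, Continuous (f n)) (hμ : IsHomogeneous f μ) {γ : Set (X × X)} (hγ : γ ∈ 𝓤 X) :
    ∃ η ∈ 𝓤 X, ∃ C : ℝ≥0∞, C ≠ ⊤ ∧ ∀ y n, 1 ≤ n →
      sepCard f univ n γ * μ (dynBall f y n η) ≤ C := by
  obtain ⟨t, ht, hto, _, htγ⟩ := comp_open_symm_mem_uniformity_sets hγ
  obtain ⟨η, hη, c, -, hc⟩ := hμ t ht
  refine ⟨η, hη, c * μ univ, by finiteness, fun y n hn => ?_⟩
  obtain ⟨E, -, hE, hcard⟩ := exists_isSep_card_eq_sepCard (n := n) hf hγ univ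
  rw [← hcard]
  exact hE.card_mul_le_mul_measure_univ hf μ hto htγ fun x => hc x y n hn

theorem exists_le_sepCard_mul [NeZero μ] (hf : ∀ n, Continuous (f n))
    (hμ : IsHomogeneous f μ) {γ : Set (X × X)} (hγ : γ ∈ 𝓤 X) :
    ∃ γ₀ ∈ 𝓤 X, ∃ C : ℝ≥0∞, C ≠ 0 ∧ ∀ y n, 1 ≤ n →
      C ≤ sepCard f univ n γ₀ * μ (dynBall f y n γ) := by
  obtain ⟨η, hη, c, -, hc⟩ := hμ γ hγ
  obtain ⟨γ₀, ⟨hγ₀, -, _⟩, hγ₀η⟩ := uniformity_hasBasis_open_symmetric.mem_iff.mp hη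
  refine ⟨γ₀, hγ₀, μ univ / c, by simp [NeZero.ne μ], fun y n hn => ?_⟩
  obtain ⟨E, -, hE, hcard⟩ := exists_isSep_card_eq_sepCard (n := n) hf hγ₀ univ
  rw [← hcard]
  refine ENNReal.div_le_of_le_mul ?_
  rw [mul_assoc, mul_comm (μ _)]
  exact measure_univ_le_card_mul μ
    (fun x => hE.exists_mem_dynBall_of_card_eq_sepCard hf hγ₀ (subset_univ _) hcard
      (mem_univ x))
    fun e _ => (measure_mono (dynBall_mono e hγ₀η)).trans (hc y e n hn)

theorem measure_dynBall_ne_zero [NeZero μ] (hf : ∀ n, Continuous (f n))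
    (hμ : IsHomogeneous f μ) {γ : Set (X × X)} (hγ : γ ∈ 𝓤 X) (y : X) {n : ℕ}
    (hn : 1 ≤ n) : μ (dynBall f y n γ) ≠ 0 := by
  obtain ⟨γ₀, -, C, hC, hle⟩ := hμ.exists_le_sepCard_mul hf hγ
  intro h
  simpa [h, hC] using hle y n hn

theorem entropy_le [OpensMeasurableSpace X] [IsFiniteMeasure μ] [NeZero μ]
    (hf : ∀ n, Continuous (f n)) (hμ : IsHomogeneous f μ) (y : X) :
    entropy f univ ≤ ⨆ γ ∈ 𝓤 X, atTop.limsup fun n : ℕ =>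
      ((-(Real.log (μ (dynBall f y n γ)).toReal) / n : ℝ) : EReal) := by
  have : Nonempty X := Measure.nonempty_of_neZero μ
  refine iSup₂_le fun γ hγ => ?_
  obtain ⟨η, hη, C, hC, hle⟩ := hμ.exists_sepCard_mul_le hf hγ
  refine le_iSup₂_of_le η hη (limsup_coe_div_le_of_le_const_add (C := Real.log C.toReal) ?_)
  filter_upwards [eventually_ge_atTop 1] with n hn
  have := ENNReal.log_toReal_add_log_toReal_le
    (Nat.cast_ne_zero.mpr (sepCard_ne_zero hf hγ univ_nonempty)) (hμ.measure_dynBall_ne_zero hf hη y hn)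
    hC (hle y n hn)
  rw [ENNReal.toReal_natCast] at this
  linarith

theorem le_entropy [IsFiniteMeasure μ] [NeZero μ] (hf : ∀ n, Continuous (f n))
    (hμ : IsHomogeneous f μ) (y : X) :
    ⨆ γ ∈ 𝓤 X, atTop.limsup (fun n : ℕ =>
      ((-(Real.log (μ (dynBall f y n γ)).toReal) / n : ℝ) : EReal)) ≤ entropy f univ := by
  refine iSup₂_le fun γ hγ => ?_
  obtain ⟨γ₀, hγ₀, C, hC, hle⟩ := hμ.exists_le_sepCard_mul hf hγ
  refine le_iSup₂_of_le γ₀ hγ₀ (limsup_coe_div_le_of_le_const_add (C := -Real.log C.toReal) ?_)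
  filter_upwards [eventually_ge_atTop 1] with n hn
  have := ENNReal.log_toReal_le_log_toReal_add_log_toReal (ENNReal.natCast_ne_top _)
    (measure_ne_top μ _) hC (hle y n hn)
  rw [ENNReal.toReal_natCast] at this
  linarith

end IsHomogeneous

open MeasureTheory in
theorem entropy_eq_homogeneous_measure_general {X : Type*} [UniformSpace X] [CompactSpace X]
    [MeasurableSpace X] [BorelSpace X]
    (f : ℕ → X → X) (hf : ∀ n, Continuous (f n))
    (μ : Measure X) [IsProbabilityMeasure μ]
    (hhom : ∀ γ ∈ 𝓤 X, ∃ η ∈ 𝓤 X, ∃ c : NNReal, 0 < c ∧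
      ∀ x y : X, ∀ n : ℕ, 1 ≤ n →
        μ (dynBall f y n η) ≤ (c : ENNReal) * μ (dynBall f x n γ)) :
    ∀ y : X, entropy f Set.univ =
      ⨆ γ ∈ 𝓤 X, atTop.limsup fun n : ℕ =>
        ((-(Real.log (μ (dynBall f y n γ)).toReal) / n : ℝ) : EReal) :=
  fun y => le_antisymm (IsHomogeneous.entropy_le hf hhom y) (IsHomogeneous.le_entropy hf hhom y)

open MeasureTheory in
/-- If `μ` is an `f_{0,∞}`-homogeneous Borel probability measure, then the entropy of the
system equals `k(f_{0,∞}, μ) = lim_γ limsup_n −(1/n) log μ(D_n(f, y, γ))`, for every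
choice of base point `y`. -/
theorem entropy_eq_homogeneous_measure {X : Type*} [UniformSpace X] [CompactSpace X]
    [MeasurableSpace X] [BorelSpace X]
    (f : ℕ → X → X) (hf : ∀ n, Continuous (f n))
    (μ : Measure X) [IsProbabilityMeasure μ]
    (hfin : ∀ K : Set X, IsCompact K → μ K < ⊤)
    (hpos : ∃ K : Set X, IsCompact K ∧ 0 < μ K)
    (hhom : ∀ γ ∈ 𝓤 X, ∃ η ∈ 𝓤 X, ∃ c : NNReal, 0 < c ∧
      ∀ x y : X, ∀ n : ℕ, 1 ≤ n →
        μ (dynBall f y n η) ≤ (c : ENNReal) * μ (dynBall f x n γ)) :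
    ∀ y : X, entropy f Set.univ =
      ⨆ γ ∈ 𝓤 X, atTop.limsup fun n : ℕ =>
        ((-(Real.log (μ (dynBall f y n γ)).toReal) / n : ℝ) : EReal) :=
  entropy_eq_homogeneous_measure_general f hf μ hhom
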